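/- arXiv:2501.08993 — 4 statements merged into one kernel-verified Lean document; each statement's English description precedes it below -/
import Mathlib

section
/- Let R be a ring and (M_j)_{j∈J} a family of R-modules each with local endomorphism ring. If X is a direct summand of ⊕_{j∈J} M_j and End(X) is local, then X ≅ M_j for some j ∈ J. -/
/-!
Since `X` is nonzero, choose `x ≠ 0`; the component maps `φⱼ = p ∘ ιⱼ ∘ πⱼ ∘ i` of the splitting
`X → ⨁ Mⱼ → X` satisfy `∑ φⱼ x = x`, the sum running over the finite support of `i x`. Hence
`1 - ∑ φⱼ` is not injective, so not a unit, and locality of `End(X)` makes some `φⱼ` a unit.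
Then `X` is a retract of `Mⱼ`; the corresponding idempotent of the local ring `End(Mⱼ)` is
nonzero, hence `1`, and the retraction is an isomorphism.
-/

universe u

open DirectSum

section ModuleDefs

variable (R : Type u) [Ring R]

/-- `g` is a pure epimorphism: `Hom(X, -)` lifts along `g` for every finitely presented `X`. -/
def IsPureEpi {L M : Type u} [AddCommGroup L] [AddCommGroup M] [Module R L] [Module R M]
    (g : L →ₗ[R] M) : Prop :=
  ∀ (X : Type u) (_ : AddCommGroup X) (_ : Module R X), Module.FinitePresentation R X →
    ∀ h : X →ₗ[R] M, ∃ h' : X →ₗ[R] L, g.comp h' = h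

/-- `f` is a pure monomorphism: it is injective and the projection onto its cokernel is a
pure epimorphism. -/
def IsPureMono {K L : Type u} [AddCommGroup K] [AddCommGroup L] [Module R K] [Module R L]
    (f : K →ₗ[R] L) : Prop :=
  Function.Injective f ∧ IsPureEpi R (LinearMap.range f).mkQ

/-- `M` is pure-injective: every map to `M` extends along pure monomorphisms. -/
def IsPureInjectiveModule (M : Type u) [AddCommGroup M] [Module R M] : Prop :=
  ∀ (K L : Type u) (_ : AddCommGroup K) (_ : AddCommGroup L) (_ : Module R K) (_ : Module R L)
    (f : K →ₗ[R] L), IsPureMono R f → ∀ g : K →ₗ[R] M, ∃ h : L →ₗ[R] M, h.comp f = g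

/-- `M` is `Σ`-pure-injective: every direct sum of copies of `M` is pure-injective. -/
def IsSigmaPureInjective (M : Type u) [AddCommGroup M] [Module R M] : Prop :=
  ∀ J : Type u, IsPureInjectiveModule R (DirectSum J fun _ : J => M)

/-- `X` is (isomorphic to) a direct summand of `Y`. -/
def IsDirectSummandOf (X Y : Type u) [AddCommGroup X] [AddCommGroup Y]
    [Module R X] [Module R Y] : Prop :=
  ∃ (i : X →ₗ[R] Y) (p : Y →ₗ[R] X), p.comp i = LinearMap.id

/-- `X ∈ Add(M)`: `X` is a direct summand of a direct sum of copies of `M`. -/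
def MemAdd (M : Type u) [AddCommGroup M] [Module R M]
    (X : Type u) [AddCommGroup X] [Module R X] : Prop :=
  ∃ I : Type u, IsDirectSummandOf R X (DirectSum I fun _ : I => M)

/-- `X ∈ Prod(M)`: `X` is a direct summand of a direct product of copies of `M`. -/
def MemProd (M : Type u) [AddCommGroup M] [Module R M]
    (X : Type u) [AddCommGroup X] [Module R X] : Prop :=
  ∃ I : Type u, IsDirectSummandOf R X (I → M)

/-- `M` is product-rigid: every object of `Prod(M)` with local endomorphism ring is isomorphic
to a direct summand of `M`. -/
def IsProductRigid (M : Type u) [AddCommGroup M] [Module R M] : Prop :=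
  ∀ (X : Type u) (_ : AddCommGroup X) (_ : Module R X),
    MemProd R M X → IsLocalRing (Module.End R X) → IsDirectSummandOf R X M

end ModuleDefs

/-- A set `I` is `ω`-measurable if it is uncountable and carries a nonprincipal countably
complete ultrafilter (equivalently, a countably additive non-trivial `{0,1}`-valued measure on
the full power set vanishing on singletons). -/
def IsOmegaMeasurable (I : Type u) : Prop :=
  ¬ Countable I ∧ ∃ U : Ultrafilter I, (∀ x : I, ({x} : Set I) ∉ U) ∧
    ∀ s : ℕ → Set I, (∀ n, s n ∈ U) → (⋂ n, s n) ∈ U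

theorem IsIdempotentElem.eq_zero_or_one_of_isLocalRing {A : Type*} [Ring A] [IsLocalRing A]
    {e : A} (he : IsIdempotentElem e) : e = 0 ∨ e = 1 := by
  rcases IsLocalRing.isUnit_or_isUnit_of_add_one (add_sub_cancel e 1) with h | h
  · exact Or.inr ((IsIdempotentElem.iff_eq_one_of_isUnit h).mp he)
  · exact Or.inl (sub_eq_self.mp ((IsIdempotentElem.iff_eq_one_of_isUnit h).mp he.one_sub))

section

variable {R X N : Type*} [Ring R] [AddCommGroup X] [Module R X] [AddCommGroup N] [Module R N]

theorem Module.End.exists_isUnit_of_sum_apply_eq_self [IsLocalRing (Module.End R X)]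
    {ι : Type*} (s : Finset ι) (φ : ι → Module.End R X) {x : X} (hx : x ≠ 0)
    (h : ∑ i ∈ s, φ i x = x) : ∃ i ∈ s, IsUnit (φ i) := by
  have h_not_unit : ¬ IsUnit (1 - ∑ i ∈ s, φ i) := fun hu =>
    hx <| ((Module.End.isUnit_iff _).mp hu).injective <| by simp [LinearMap.sum_apply, h]
  exact IsLocalRing.exists_of_isUnit_sum <|
    (IsLocalRing.isUnit_or_isUnit_of_add_one (sub_add_cancel 1 _)).resolve_left h_not_unit

theorem LinearMap.comp_eq_id_of_comp_eq_id_of_isLocalRing [Nontrivial X]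
    [IsLocalRing (Module.End R N)] {f : X →ₗ[R] N} {g : N →ₗ[R] X}
    (hgf : g ∘ₗ f = LinearMap.id) : f ∘ₗ g = LinearMap.id := by
  have hidem : IsIdempotentElem (f ∘ₗ g : Module.End R N) := by
    change f ∘ₗ (g ∘ₗ f) ∘ₗ g = f ∘ₗ g
    rw [hgf]
    rfl
  refine hidem.eq_zero_or_one_of_isLocalRing.resolve_left fun h0 => ?_
  obtain ⟨x, hx⟩ := exists_ne (0 : X)
  have hid : g ∘ₗ (f ∘ₗ g) ∘ₗ f = LinearMap.id := by
    change (g ∘ₗ f) ∘ₗ (g ∘ₗ f) = LinearMap.id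
    rw [hgf]
    rfl
  exact hx (by simpa [h0] using (LinearMap.congr_fun hid x).symm)

theorem nonempty_linearEquiv_of_isUnit_comp [Nontrivial X] [IsLocalRing (Module.End R N)]
    (f : X →ₗ[R] N) (g : N →ₗ[R] X) (h : IsUnit (g ∘ₗ f : Module.End R X)) :
    Nonempty (X ≃ₗ[R] N) := by
  obtain ⟨w, hw⟩ := h.exists_left_inv
  have hleft : (w ∘ₗ g) ∘ₗ f = LinearMap.id := hw
  exact ⟨.ofLinearMap f (w ∘ₗ g) (LinearMap.comp_eq_id_of_comp_eq_id_of_isLocalRing hleft) hleft⟩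

end

/-- **Walker–Warfield.** If `(M j)_{j ∈ J}` is a family of modules with local endomorphism
rings and `X` is a direct summand of `⨁ j, M j` with `End(X)` local, then `X ≅ M j` for
some `j`. -/
theorem summand_of_directSum_local {R : Type u} [Ring R] {J : Type u}
    (M : J → Type u) [∀ j, AddCommGroup (M j)] [∀ j, Module R (M j)]
    (hloc : ∀ j, IsLocalRing (Module.End R (M j)))
    (X : Type u) [AddCommGroup X] [Module R X]
    (hX : IsDirectSummandOf R X (DirectSum J M))
    (hXloc : IsLocalRing (Module.End R X)) :
    ∃ j : J, Nonempty (X ≃ₗ[R] M j) := by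
  classical
  obtain ⟨i, p, hpi⟩ := hX
  have : Nontrivial X :=
    not_subsingleton_iff_nontrivial.mp fun _ => not_subsingleton (Module.End R X) inferInstance
  obtain ⟨x, hx⟩ := exists_ne (0 : X)
  let φ : J → Module.End R X := fun j => (p ∘ₗ lof R J M j) ∘ₗ (component R J M j ∘ₗ i)
  have hsum : ∑ j ∈ (i x).support, φ j x = x := by
    change ∑ j ∈ (i x).support, p (of M j (i x j)) = x
    rw [← map_sum, sum_support_of]
    exact LinearMap.congr_fun hpi x
  obtain ⟨j, -, hj⟩ := Module.End.exists_isUnit_of_sum_apply_eq_self _ φ hx hsum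
  exact ⟨j, nonempty_linearEquiv_of_isUnit_comp _ _ hj⟩
end

section
/- Let R be a ring and M an R-module. Then M is product-complete (i.e. Prod(M) ⊆ Add(M)) if and only if Add(M) is a preenveloping class in Mod-R. -/
/-!
If `Prod(M) ⊆ Add(M)`, then `M ^ (I × ℕ)` is a direct summand of a direct sum of copies of `M`, and
Chase's lemma for that splitting shows that `M`, and hence every `⨁_K M`, has the descending
chain condition on (infinitary) pp-definable subgroups. By a Zorn argument this chain condition
makes `⨁_K M` algebraically compact: a system of linear equations over it is solvable as soon as
each finite subsystem is. The inclusion `⨁_K M → M ^ K` has a left inverse on any finite set of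
elements, so it splits; hence `Add(M) = Prod(M)`, which is preenveloping through
`N → M ^ Hom(N, M)`. Conversely, the projections of `M ^ I` factor through its `Add(M)`-preenvelope
`M ^ I → C`, so `M ^ I` is a direct summand of `C ∈ Add(M)`.
-/

universe u

open DirectSum

variable (R : Type u) [Ring R]

/-- A class of `R`-modules is preenveloping if every module admits a preenvelope into the
class. -/
def IsPreenvelopingClass (P : (N : Type u) → [AddCommGroup N] → [Module R N] → Prop) : Prop :=
  ∀ (N : Type u) (_ : AddCommGroup N) (_ : Module R N),
    ∃ (C : Type u) (_ : AddCommGroup C) (_ : Module R C) (g : N →ₗ[R] C), P C ∧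
      ∀ (C' : Type u) (_ : AddCommGroup C') (_ : Module R C') (g' : N →ₗ[R] C'),
        P C' → ∃ h : C →ₗ[R] C', h.comp g = g'


section

variable {R}

theorem IsDirectSummandOf.refl (X : Type u) [AddCommGroup X] [Module R X] :
    IsDirectSummandOf R X X :=
  ⟨LinearMap.id, LinearMap.id, rfl⟩

theorem IsDirectSummandOf.trans {X Y Z : Type u} [AddCommGroup X] [AddCommGroup Y]
    [AddCommGroup Z] [Module R X] [Module R Y] [Module R Z]
    (hXY : IsDirectSummandOf R X Y) (hYZ : IsDirectSummandOf R Y Z) :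
    IsDirectSummandOf R X Z := by
  obtain ⟨i, p, hpi⟩ := hXY
  obtain ⟨j, q, hqj⟩ := hYZ
  exact ⟨j ∘ₗ i, p ∘ₗ q, LinearMap.ext fun x =>
    (congrArg p (LinearMap.congr_fun hqj (i x))).trans (LinearMap.congr_fun hpi x)⟩

variable {M : Type u} [AddCommGroup M] [Module R M]

theorem MemAdd.of_isDirectSummandOf {X Y : Type u} [AddCommGroup X] [AddCommGroup Y]
    [Module R X] [Module R Y] (hY : MemAdd R M Y) (hXY : IsDirectSummandOf R X Y) :
    MemAdd R M X :=
  let ⟨I, hI⟩ := hY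
  ⟨I, hXY.trans hI⟩

theorem memAdd_self : MemAdd R M M :=
  ⟨PUnit, lof R PUnit (fun _ => M) ⟨⟩, component R PUnit (fun _ => M) ⟨⟩,
    LinearMap.ext fun x => component.lof_self R (M := fun _ : PUnit.{u + 1} => M) ⟨⟩ x⟩

theorem memProd_pi (I : Type u) : MemProd R M (I → M) :=
  ⟨I, .refl _⟩

theorem IsPreenvelopingClass.congr {P Q : (N : Type u) → [AddCommGroup N] → [Module R N] → Prop}
    (hP : IsPreenvelopingClass R P)
    (hPQ : ∀ (N : Type u) [AddCommGroup N] [Module R N], P N ↔ Q N) :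
    IsPreenvelopingClass R Q := by
  intro N _ _
  obtain ⟨C, _, _, g, hC, hg⟩ := hP N _ _
  exact ⟨C, _, _, g, (hPQ C).1 hC, fun C' _ _ g' hC' => hg C' _ _ g' ((hPQ C').2 hC')⟩

theorem IsPreenvelopingClass.exists_isDirectSummandOf_pi
    {P : (N : Type u) → [AddCommGroup N] → [Module R N] → Prop} (hP : IsPreenvelopingClass R P)
    {I : Type u} (X : I → Type u) [∀ i, AddCommGroup (X i)] [∀ i, Module R (X i)]
    (hX : ∀ i, P (X i)) :
    ∃ (C : Type u) (_ : AddCommGroup C) (_ : Module R C), P C ∧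
      IsDirectSummandOf R (∀ i, X i) C := by
  obtain ⟨C, _, _, g, hC, hg⟩ := hP (∀ i, X i) _ _
  choose h hh using fun i => hg (X i) _ _ (LinearMap.proj i) (hX i)
  exact ⟨C, _, _, hC, g, LinearMap.pi h,
    LinearMap.ext fun x => funext fun i => LinearMap.congr_fun (hh i) x⟩

variable (M) in
theorem isPreenvelopingClass_memProd : IsPreenvelopingClass R (fun N _ _ => MemProd R M N) := by
  intro N _ _
  refine ⟨(N →ₗ[R] M) → M, _, _, LinearMap.pi fun f => f, memProd_pi _, ?_⟩
  rintro C' _ _ g' ⟨J, i, p, hpi⟩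
  refine ⟨p ∘ₗ LinearMap.pi fun j => LinearMap.proj (LinearMap.proj j ∘ₗ i ∘ₗ g'),
    LinearMap.ext fun n => ?_⟩
  exact LinearMap.congr_fun hpi (g' n)

theorem Finsupp.linearCombination_add_left {Λ X : Type*} [AddCommGroup X] [Module R X]
    (v w : Λ → X) (ρ : Λ →₀ R) :
    linearCombination R (v + w) ρ = linearCombination R v ρ + linearCombination R w ρ := by
  simp only [linearCombination_apply, Pi.add_apply, smul_add, sum_add]

theorem Finsupp.linearCombination_neg_left {Λ X : Type*} [AddCommGroup X] [Module R X]
    (v : Λ → X) (ρ : Λ →₀ R) : linearCombination R (-v) ρ = -linearCombination R v ρ := by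
  simp only [linearCombination_apply, Pi.neg_apply, smul_neg, sum_neg]

theorem Finsupp.linearCombination_sub_left {Λ X : Type*} [AddCommGroup X] [Module R X]
    (v w : Λ → X) (ρ : Λ →₀ R) :
    linearCombination R (v - w) ρ = linearCombination R v ρ - linearCombination R w ρ := by
  rw [sub_eq_add_neg, linearCombination_add_left, linearCombination_neg_left, sub_eq_add_neg]

def homSolutions {Λ : Type*} (E : Set (Λ →₀ R)) (X : Type*) [AddCommGroup X] [Module R X] :
    AddSubgroup (Λ → X) where
  carrier := {w | ∀ ρ ∈ E, Finsupp.linearCombination R w ρ = 0}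
  zero_mem' ρ _ := by simp
  add_mem' hw hv ρ hρ := by rw [Finsupp.linearCombination_add_left, hw ρ hρ, hv ρ hρ, add_zero]
  neg_mem' hw ρ hρ := by rw [Finsupp.linearCombination_neg_left, hw ρ hρ, neg_zero]

theorem homSolutions_anti {Λ X : Type*} [AddCommGroup X] [Module R X] {E E' : Set (Λ →₀ R)}
    (h : E ⊆ E') : homSolutions E' X ≤ homSolutions E X :=
  fun _ hw ρ hρ => hw ρ (h hρ)

theorem comp_mem_homSolutions {Λ X Y : Type*} [AddCommGroup X] [Module R X] [AddCommGroup Y]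
    [Module R Y] {E : Set (Λ →₀ R)} (f : X →ₗ[R] Y) {w : Λ → X} (hw : w ∈ homSolutions E X) :
    f ∘ w ∈ homSolutions E Y := fun ρ hρ => by
  rw [← Finsupp.apply_linearCombination, hw ρ hρ, map_zero]

theorem mk_pi_lt_mk_set_sum_nat (E X : Type u) [Finite E] :
    Cardinal.mk (E → X) < Cardinal.mk (Set (X ⊕ ULift.{u} ℕ)) := by
  have hinf : Cardinal.aleph0 ≤ Cardinal.mk (X ⊕ ULift.{u} ℕ) := Cardinal.aleph0_le_mk _
  calc Cardinal.mk (E → X) = Cardinal.mk X ^ Cardinal.mk E := (Cardinal.power_def X E).symm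
    _ ≤ Cardinal.mk (X ⊕ ULift.{u} ℕ) ^ (Nat.card E : Cardinal) := by
      rw [Nat.cast_card]
      exact Cardinal.power_le_power_right (Cardinal.mk_le_of_injective Sum.inl_injective)
    _ ≤ Cardinal.mk (X ⊕ ULift.{u} ℕ) := Cardinal.power_nat_le hinf
    _ < Cardinal.mk (Set (X ⊕ ULift.{u} ℕ)) := Cardinal.mk_set ▸ Cardinal.cantor _

/-- An infinitary positive primitive formula `∃ w, w free = x ∧ ∀ ρ ∈ rows, ∑ q, ρ q • w q = 0`
in one free variable `x`. -/
structure PPFormula (R : Type u) [Ring R] : Type (u + 1) where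
  Var : Type u
  rows : Set (Var →₀ R)
  free : Var

namespace PPFormula

def subgroup (φ : PPFormula R) (X : Type u) [AddCommGroup X] [Module R X] : AddSubgroup X :=
  (homSolutions φ.rows X).map (Pi.evalAddMonoidHom (fun _ => X) φ.free)

section

variable {φ : PPFormula R}

theorem mem_subgroup {X : Type u} [AddCommGroup X] [Module R X] {x : X} :
    x ∈ φ.subgroup X ↔ ∃ w ∈ homSolutions φ.rows X, w φ.free = x :=
  AddSubgroup.mem_map

theorem map_mem_subgroup {X Y : Type u} [AddCommGroup X] [Module R X] [AddCommGroup Y]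
    [Module R Y] (f : X →ₗ[R] Y) {x : X} (hx : x ∈ φ.subgroup X) : f x ∈ φ.subgroup Y := by
  obtain ⟨w, hw, rfl⟩ := mem_subgroup.1 hx
  exact mem_subgroup.2 ⟨f ∘ w, comp_mem_homSolutions f hw, rfl⟩

theorem mem_subgroup_pi_iff {I : Type u} {X : I → Type u} [∀ i, AddCommGroup (X i)]
    [∀ i, Module R (X i)] {x : ∀ i, X i} :
    x ∈ φ.subgroup (∀ i, X i) ↔ ∀ i, x i ∈ φ.subgroup (X i) := by
  refine ⟨fun hx i => map_mem_subgroup (LinearMap.proj i) hx, fun hx => ?_⟩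
  choose w hw hwx using fun i => mem_subgroup.1 (hx i)
  refine mem_subgroup.2 ⟨fun q i => w i q, fun ρ hρ => funext fun i => ?_, funext hwx⟩
  exact (Finsupp.apply_linearCombination R (LinearMap.proj i) _ ρ).trans (hw i ρ hρ)

theorem mem_subgroup_directSum_iff {K : Type u} {X : K → Type u} [∀ k, AddCommGroup (X k)]
    [∀ k, Module R (X k)] {x : ⨁ k, X k} :
    x ∈ φ.subgroup (⨁ k, X k) ↔ ∀ k, x k ∈ φ.subgroup (X k) := by
  classical
  refine ⟨fun hx k => map_mem_subgroup (component R K X k) hx, fun hx => ?_⟩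
  rw [← sum_support_of x]
  exact sum_mem fun k _ => by simpa only [lof_eq_of] using map_mem_subgroup (lof R K X k) (hx k)

theorem subgroup_lt_of_directSum_lt {ψ : PPFormula R} {K : Type u}
    (h : φ.subgroup (⨁ _ : K, M) < ψ.subgroup (⨁ _ : K, M)) :
    φ.subgroup M < ψ.subgroup M := by
  classical
  obtain ⟨hle, v, hvψ, hvφ⟩ := SetLike.lt_iff_le_and_exists.1 h
  obtain ⟨k, hk⟩ := not_forall.1 (mt mem_subgroup_directSum_iff.2 hvφ)
  refine SetLike.lt_iff_le_and_exists.2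
    ⟨fun x hx => ?_, v k, mem_subgroup_directSum_iff.1 hvψ k, hk⟩
  have hkx := map_mem_subgroup (lof R K (fun _ => M) k) hx
  simpa using mem_subgroup_directSum_iff.1 (hle hkx) k

end

variable (φ : ℕ → PPFormula R)

def tailProd (I : Type u) (n : ℕ) : AddSubgroup (I × ℕ → M) :=
  AddSubgroup.pi Set.univ fun q => if q.2 < n then ⊥ else (φ q.2).subgroup M

variable {φ} {I J : Type u}

theorem mem_tailProd {n : ℕ} {z : I × ℕ → M} :
    z ∈ tailProd φ I n ↔ ∀ q, z q ∈ if q.2 < n then ⊥ else (φ q.2).subgroup M := by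
  simp [tailProd, AddSubgroup.mem_pi]

theorem tailProd_anti {n n' : ℕ} (h : n ≤ n') :
    tailProd φ I n' ≤ (tailProd φ I n : AddSubgroup (I × ℕ → M)) := by
  intro z hz
  rw [mem_tailProd] at hz ⊢
  intro q
  have hq := hz q
  split_ifs at hq ⊢ with h₁ h₂ h₂
  · exact hq
  · omega
  · simp only [AddSubgroup.mem_bot] at hq
    simp [hq]
  · exact hq

theorem tailProd_le_subgroup (hφ : Antitone fun n => (φ n).subgroup M) (n : ℕ) :
    tailProd φ I n ≤ (φ n).subgroup (I × ℕ → M) := by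
  intro z hz
  refine mem_subgroup_pi_iff.2 fun q => ?_
  have hq := mem_tailProd.1 hz q
  split_ifs at hq with h
  · simp only [AddSubgroup.mem_bot] at hq
    simp [hq]
  · exact hφ (not_lt.1 h) hq

theorem exists_chase_seq (hφ : Antitone fun n => (φ n).subgroup M)
    (f : (I × ℕ → M) →ₗ[R] ⨁ _ : J, M)
    (h : ∀ n (E : Finset J), ∃ z ∈ tailProd φ I n, ∃ j ∉ E, ∃ m, f z j ∉ (φ m).subgroup M) :
    ∃ (z : ℕ → I × ℕ → M) (n : ℕ → ℕ) (j : ℕ → J), StrictMono n ∧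
      (∀ t, z t ∈ tailProd φ I (n t)) ∧ (∀ t, f (z t) (j t) ∉ (φ (n (t + 1))).subgroup M) ∧
      ∀ s t, s < t → f (z s) (j t) = 0 := by
  classical
  choose z hz j hj m hm using h
  -- from the state `(n, E)`, move past level `m n E` and forbid the support of `f (z n E)`
  let step : ℕ × Finset J → ℕ × Finset J :=
    fun s => (max (m s.1 s.2) s.1 + 1, s.2 ∪ (f (z s.1 s.2)).support)
  let st : ℕ → ℕ × Finset J := fun t => step^[t] (0, ∅)
  have hst (t : ℕ) : st (t + 1) = step (st t) := Function.iterate_succ_apply' step t _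
  have hE : Monotone fun t => (st t).2 :=
    monotone_nat_of_le_succ fun t => by simp only [hst, step, Finset.subset_union_left]
  refine ⟨fun t => z (st t).1 (st t).2, fun t => (st t).1, fun t => j (st t).1 (st t).2,
    strictMono_nat_of_lt_succ fun t => ?_, fun t => hz _ _, fun t hmem => ?_, fun s t hlt => ?_⟩
  · simp only [hst, step]
    omega
  · refine hm _ _ (hφ ?_ hmem)
    simp only [hst, step]
    omega
  · refine DFinsupp.notMem_support_iff.1 fun hmem => hj (st t).1 (st t).2 (hE hlt ?_)
    simp only [hst, step]
    exact Finset.mem_union_right _ hmem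

theorem diagonal_sub_sum_mem_tailProd {z : ℕ → I × ℕ → M} {n : ℕ → ℕ} (hn : StrictMono n)
    (hz : ∀ t, z t ∈ tailProd φ I (n t)) (T : ℕ) :
    (fun q => ∑ t ∈ Finset.range (q.2 + 1), z t q) - ∑ t ∈ Finset.range (T + 1), z t ∈
      tailProd φ I (n (T + 1)) := by
  refine mem_tailProd.2 fun q => ?_
  simp only [Pi.sub_apply, Finset.sum_apply]
  rcases le_or_gt T q.2 with hTq | hqT
  · rw [← Finset.sum_Ico_eq_sub _ (by omega)]
    refine sum_mem fun t ht => mem_tailProd.1 (tailProd_anti (hn.monotone ?_) (hz t)) q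
    simp only [Finset.mem_Ico] at ht
    omega
  · have hzero : ∀ t ∈ Finset.Ico (q.2 + 1) (T + 1), z t q = 0 := fun t ht => by
      have hq := mem_tailProd.1 (hz t) q
      simp only [Finset.mem_Ico] at ht
      rwa [if_pos (by have : t ≤ n t := hn.le_apply; omega), AddSubgroup.mem_bot] at hq
    rw [← neg_sub, ← Finset.sum_Ico_eq_sub _ (by omega), Finset.sum_eq_zero hzero, neg_zero]
    exact zero_mem _

/-- Chase's lemma. -/
theorem chase (hφ : Antitone fun n => (φ n).subgroup M) (f : (I × ℕ → M) →ₗ[R] ⨁ _ : J, M) :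
    ∃ (n : ℕ) (E : Finset J), ∀ z ∈ tailProd φ I n, ∀ j ∉ E, ∀ m, f z j ∈ (φ m).subgroup M := by
  classical
  by_contra! h
  obtain ⟨z, n, j, hn, hz, hfz, hzero⟩ := exists_chase_seq hφ f h
  -- `∑ t, z t`, a finite sum in each coordinate because `z t` vanishes below level `n t ≥ t`
  let diag : I × ℕ → M := fun q => ∑ t ∈ Finset.range (q.2 + 1), z t q
  have hdiag (T : ℕ) : f diag (j T) ∉ (φ (n (T + 1))).subgroup M := by
    intro hmem
    have hsplit : f diag (j T) - f (diag - ∑ t ∈ Finset.range (T + 1), z t) (j T)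
        = f (z T) (j T) := by
      rw [map_sub, map_sum, DFinsupp.sub_apply, DFinsupp.finsetSum_apply, Finset.sum_range_succ,
        Finset.sum_eq_zero fun s hs => hzero s T (Finset.mem_range.1 hs)]
      abel
    have htail := mem_subgroup_directSum_iff.1 (map_mem_subgroup f
      (tailProd_le_subgroup hφ _ (diagonal_sub_sum_mem_tailProd hn hz T))) (j T)
    exact hfz T (hsplit ▸ sub_mem hmem htail)
  have hj : Function.Injective j := Function.Injective.of_lt_imp_ne fun s t hst heq =>
    hfz s (by rw [heq, hzero s t hst]; exact zero_mem _)
  refine (Set.infinite_of_injective_forall_mem hj fun T => ?_).not_finite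
    (f diag).support.finite_toSet
  exact DFinsupp.mem_support_iff.2 fun h0 => hdiag T (h0 ▸ zero_mem _)

variable (φ) in
/-- Chase's lemma applied to a splitting of `M ^ (I × ℕ)` into a sum of copies of `M`, with `I`
so large that `2 ^ I` does not fit in a finite power of `M`. -/
theorem not_strictAnti_subgroup (hM : ∀ I : Type u, MemAdd R M (I → M)) :
    ¬ StrictAnti fun n => (φ n).subgroup M := by
  classical
  intro hφ
  let I := M ⊕ ULift.{u} ℕ
  obtain ⟨J, e, r, hre⟩ := hM (I × ℕ)
  obtain ⟨n, E, hE⟩ := chase hφ.antitone e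
  obtain ⟨x, hx, hxn⟩ := SetLike.exists_of_lt (hφ n.lt_succ_self)
  let z : Set I → I × ℕ → M := fun A q => if q.2 = n ∧ q.1 ∈ A then x else 0
  have hz (A : Set I) : z A ∈ tailProd φ I n := mem_tailProd.2 fun q => by
    by_cases hq : q.2 = n ∧ q.1 ∈ A
    · simp [z, hq, hx]
    · simp [z, hq]
  refine (mk_pi_lt_mk_set_sum_nat E M).not_ge
    (Cardinal.mk_le_of_injective (f := fun A (j : E) => e (z A) j) fun A B hAB => ?_)
  have hsub : e (z A - z B) ∈ (φ (n + 1)).subgroup (⨁ _ : J, M) := by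
    refine mem_subgroup_directSum_iff.2 fun j => ?_
    by_cases hj : j ∈ E
    · rw [map_sub, DFinsupp.sub_apply, sub_eq_zero.2 (congrFun hAB ⟨j, hj⟩)]
      exact zero_mem _
    · exact hE _ (sub_mem (hz A) (hz B)) j hj (n + 1)
  have hcoord := mem_subgroup_pi_iff.1 (LinearMap.congr_fun hre (z A - z B) ▸
    map_mem_subgroup r hsub)
  ext α
  have hα := hcoord (α, n)
  by_cases hA : α ∈ A <;> by_cases hB : α ∈ B <;> simp_all [z]

end PPFormula

variable (R) in
def ppSubgroups (X : Type u) [AddCommGroup X] [Module R X] : Set (AddSubgroup X) :=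
  Set.range fun φ : PPFormula R => φ.subgroup X

theorem isWF_ppSubgroups_directSum
    (hM : ∀ I : Type u, MemAdd R M (I → M)) (K : Type u) :
    (ppSubgroups R (⨁ _ : K, M)).IsWF := by
  refine Set.isWF_iff_no_descending_seq.2 fun H hH hmem => ?_
  choose φ hφ using hmem
  refine PPFormula.not_strictAnti_subgroup φ hM (strictAnti_nat_of_succ_lt fun n => ?_)
  refine PPFormula.subgroup_lt_of_directSum_lt (K := K) ?_
  simpa only [hφ] using hH n.lt_succ_self

section Compactness

variable {Λ D : Type u} [AddCommGroup D] [Module R D]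

def Solves (x : Λ → D) (S : Set ((Λ →₀ R) × D)) : Prop :=
  ∀ e ∈ S, Finsupp.linearCombination R x e.1 = e.2

def FinitelySolvable (S : Set ((Λ →₀ R) × D)) : Prop :=
  ∀ Φ ⊆ S, Φ.Finite → ∃ x : Λ → D, Solves x Φ

theorem Solves.mono {x : Λ → D} {S T : Set ((Λ →₀ R) × D)} (hx : Solves x S) (h : T ⊆ S) :
    Solves x T :=
  fun e he => hx e (h he)

theorem Solves.sub_mem_homSolutions {x y : Λ → D} {S : Set ((Λ →₀ R) × D)} (hx : Solves x S)
    (hy : Solves y S) : x - y ∈ homSolutions (Prod.fst '' S) D := by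
  rintro _ ⟨e, he, rfl⟩
  rw [Finsupp.linearCombination_sub_left, hx e he, hy e he, sub_self]

theorem Solves.add_homSolutions {x w : Λ → D} {S : Set ((Λ →₀ R) × D)} (hx : Solves x S)
    (hw : w ∈ homSolutions (Prod.fst '' S) D) : Solves (x + w) S := fun e he => by
  rw [Finsupp.linearCombination_add_left, hx e he, hw e.1 ⟨e, he, rfl⟩, add_zero]

theorem FinitelySolvable.exists_maximal {S : Set ((Λ →₀ R) × D)} (hS : FinitelySolvable S) :
    ∃ T, S ⊆ T ∧ Maximal FinitelySolvable T := by
  refine zorn_subset_nonempty {T | FinitelySolvable T} (fun c hc hchain hne => ?_) S hS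
  refine ⟨⋃₀ c, fun Φ hΦ hfin => ?_, fun T hT => Set.subset_sUnion_of_mem hT⟩
  obtain ⟨T, hT, hΦT⟩ := hchain.directedOn.exists_mem_subset_of_finite_of_subset_sUnion hne hfin hΦ
  exact hc hT Φ hΦT hfin

/-- The values at `p` of the solutions of a finite subsystem form a coset of a pp-definable
subgroup; a subsystem for which that subgroup is minimal determines a value at `p` that is
consistent with every finite subsystem. -/
theorem Maximal.exists_single_mem (hD : (ppSubgroups R D).IsWF)
    {T : Set ((Λ →₀ R) × D)} (hT : Maximal FinitelySolvable T) (p : Λ) :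
    ∃ d, (Finsupp.single p 1, d) ∈ T := by
  let ψ : Set ((Λ →₀ R) × D) → PPFormula R := fun Φ => ⟨Λ, Prod.fst '' Φ, p⟩
  let 𝒜 : Set (AddSubgroup D) := {H | ∃ Φ ⊆ T, Φ.Finite ∧ (ψ Φ).subgroup D = H}
  have h𝒜 : 𝒜.IsWF := hD.mono fun _ ⟨Φ, _, _, hH⟩ => ⟨ψ Φ, hH⟩
  have hne : 𝒜.Nonempty := ⟨_, ∅, Set.empty_subset _, Set.finite_empty, rfl⟩
  obtain ⟨Φ₀, hΦ₀T, hΦ₀, hmin⟩ := h𝒜.min_mem hne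
  obtain ⟨y, hy⟩ := hT.1 Φ₀ hΦ₀T hΦ₀
  refine ⟨y p, hT.mem_of_prop_insert fun Φ hΦ hfin => ?_⟩
  let Φ' := Φ \ {(Finsupp.single p 1, y p)} ∪ Φ₀
  have hΦ'T : Φ' ⊆ T := Set.union_subset (Set.sdiff_singleton_subset_iff.2 hΦ) hΦ₀T
  obtain ⟨z, hz⟩ := hT.1 Φ' hΦ'T (hfin.sdiff.union hΦ₀)
  have hle : (ψ Φ').subgroup D ≤ (ψ Φ₀).subgroup D :=
    AddSubgroup.map_mono (homSolutions_anti (Set.image_mono Set.subset_union_right))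
  have heq : (ψ Φ').subgroup D = (ψ Φ₀).subgroup D := by
    by_contra hne'
    exact h𝒜.not_lt_min hne ⟨Φ', hΦ'T, hfin.sdiff.union hΦ₀, rfl⟩
      (hmin ▸ lt_of_le_of_ne hle hne')
  obtain ⟨w, hw, hwp⟩ : y p - z p ∈ (ψ Φ').subgroup D :=
    heq ▸ ⟨y - z, hy.sub_mem_homSolutions (hz.mono Set.subset_union_right), rfl⟩
  refine ⟨z + w, fun e he => ?_⟩
  by_cases hep : e = (Finsupp.single p 1, y p)
  · subst hep
    simp only [Finsupp.linearCombination_single, one_smul, Pi.add_apply]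
    rw [show w p = y p - z p from hwp]
    abel
  · exact (hz.add_homSolutions hw) e (Or.inl ⟨he, hep⟩)

theorem FinitelySolvable.exists_solves (hD : (ppSubgroups R D).IsWF)
    {S : Set ((Λ →₀ R) × D)} (hS : FinitelySolvable S) : ∃ x : Λ → D, Solves x S := by
  obtain ⟨T, hST, hT⟩ := hS.exists_maximal
  choose x hx using hT.exists_single_mem hD
  refine ⟨x, fun e he => ?_⟩
  let Φ := insert e ((fun q => (Finsupp.single q (1 : R), x q)) '' e.1.support)
  have hΦT : Φ ⊆ T := Set.insert_subset (hST he) (Set.image_subset_iff.2 fun q _ => hx q)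
  obtain ⟨y, hy⟩ := hT.1 Φ hΦT ((e.1.support.finite_toSet.image _).insert e)
  have hxy : ∀ q ∈ e.1.support, y q = x q := fun q hq => by
    simpa using hy _ (Set.mem_insert_of_mem _ ⟨q, hq, rfl⟩)
  rw [← hy e (Set.mem_insert e _), Finsupp.linearCombination_apply, Finsupp.linearCombination_apply]
  exact Finset.sum_congr rfl fun q hq => by simp only [hxy q hq]

end Compactness

/-- The map is determined by the linear equations `x (a + b) = x a + x b`, `x (c • a) = c • x a`
and `x (i d) = d`, in the unknowns `x a`, `a : X`. -/
theorem exists_leftInverse_of_finite {X D : Type u} [AddCommGroup X] [Module R X]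
    [AddCommGroup D] [Module R D] (hD : (ppSubgroups R D).IsWF) (i : D →ₗ[R] X)
    (h : ∀ F : Finset D, ∃ L : X →ₗ[R] D, ∀ d ∈ F, L (i d) = d) :
    ∃ L : X →ₗ[R] D, L ∘ₗ i = LinearMap.id := by
  let S₀ : Set ((X →₀ R) × D) :=
    {e | ∀ L : X →ₗ[R] D, Finsupp.linearCombination R L e.1 = e.2}
  let g : D → (X →₀ R) × D := fun d => (Finsupp.single (i d) 1, d)
  have hg : Function.Injective g := fun d d' h => congrArg Prod.snd h
  have hS : FinitelySolvable (S₀ ∪ Set.range g) := by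
    intro Φ hΦ hfin
    obtain ⟨L, hL⟩ := h (hfin.preimage hg.injOn).toFinset
    refine ⟨L, fun e he => ?_⟩
    rcases hΦ he with he₀ | ⟨d, rfl⟩
    · exact he₀ L
    · simpa [g] using hL d (by simpa using he)
  obtain ⟨x, hx⟩ := hS.exists_solves hD
  refine ⟨{ toFun := x, map_add' := fun a b => ?_, map_smul' := fun c a => ?_ },
    LinearMap.ext fun d => by simpa [g] using hx (g d) (Or.inr ⟨d, rfl⟩)⟩
  · have := hx (Finsupp.single (a + b) 1 - Finsupp.single a 1 - Finsupp.single b 1, 0)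
      (Or.inl fun L => by simp [map_add])
    simpa [sub_sub, sub_eq_zero] using this
  · have := hx (Finsupp.single (c • a) 1 - Finsupp.single a c, 0)
      (Or.inl fun L => by simp [map_smul])
    simpa [sub_eq_zero] using this

theorem isDirectSummandOf_directSum_pi
    (hM : ∀ I : Type u, MemAdd R M (I → M)) (K : Type u) :
    IsDirectSummandOf R (⨁ _ : K, M) (K → M) := by
  classical
  have hfin (F : Finset (⨁ _ : K, M)) : ∃ L : (K → M) →ₗ[R] ⨁ _ : K, M,
      ∀ d ∈ F, L (DFinsupp.coeFnLinearMap R d) = d := by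
    refine ⟨∑ k ∈ F.biUnion DFinsupp.support,
      lof R K (fun _ => M) k ∘ₗ LinearMap.proj k, fun d hd => ?_⟩
    conv_rhs => rw [← sum_support_of d]
    simp only [LinearMap.coe_sum, Finset.sum_apply, LinearMap.comp_apply, LinearMap.proj_apply,
      DFinsupp.coeFnLinearMap_apply, lof_eq_of]
    refine (Finset.sum_subset (Finset.subset_biUnion_of_mem _ hd) fun k _ hk => ?_).symm
    rw [DFinsupp.notMem_support_iff.1 hk, map_zero]
  obtain ⟨L, hL⟩ := exists_leftInverse_of_finite (isWF_ppSubgroups_directSum hM K) _ hfin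
  exact ⟨_, L, hL⟩

end

/-- `M` is product-complete (`Prod(M) ⊆ Add(M)`) iff `Add(M)` is a preenveloping class. -/
theorem productComplete_iff_add_preenveloping
    (M : Type u) [AddCommGroup M] [Module R M] :
    (∀ (X : Type u) (_ : AddCommGroup X) (_ : Module R X), MemProd R M X → MemAdd R M X) ↔
      IsPreenvelopingClass R (fun N _ _ => MemAdd R M N) := by
  refine ⟨fun hPC => ?_, fun hAdd X _ _ ⟨I, hX⟩ => ?_⟩
  · have hpow (I : Type u) : MemAdd R M (I → M) := hPC _ _ _ (memProd_pi I)
    refine (isPreenvelopingClass_memProd M).congr fun N _ _ => ⟨hPC N _ _, fun ⟨I, hI⟩ => ?_⟩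
    exact ⟨I, hI.trans (isDirectSummandOf_directSum_pi hpow I)⟩
  · obtain ⟨C, _, _, hC, hIC⟩ :=
      hAdd.exists_isDirectSummandOf_pi (fun _ : I => M) fun _ => memAdd_self
    exact hC.of_isDirectSummandOf (hX.trans hIC)
end

section
/- Let R be a ring, 𝒞 a class of R-modules closed under finite direct sums and direct summands, and f : C → A a 𝒞-precover of A. Suppose (i) idempotents of End(C) lift modulo the Jacobson radical J(End(C)), and (ii) for the right ideal I = { g ∈ End(C) : f ∘ g = 0 } there exists a right ideal J with I + J = End(C) and I ∩ J ⊆ J(End(C)). Then A has a 𝒞-cover. -/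
universe u

open DirectSum

variable {R : Type u} [Ring R]

/-!
Write `1 = a + b` in `End(C)` with `a ∈ I` and `b ∈ J`. Then `b² - b = a² - a` lies in
`I ∩ J ⊆ J(End C)`, so `b` lifts to an idempotent; conjugating it by a unit congruent to `1`
yields an idempotent `e ≡ b` with `1 - e ∈ I`, i.e. `f ∘ e = f`. Since `b I b ⊆ I ∩ J`, also
`e I e ⊆ J(End C)`. Hence the restriction of `f` to the summand `e C` is still a precover, and
an endomorphism `h` of `e C` with `f ∘ h = f` differs from `e` by an element of `e I e`, so it
is invertible.
-/

section JacobsonRadical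

variable {S : Type*} [Ring S]

theorem isUnit_of_sub_one_mem_jacobson_bot {r : S} (h : r - 1 ∈ (⊥ : Ideal S).jacobson) :
    IsUnit r := by
  have left_inv : ∀ x : S, x - 1 ∈ (⊥ : Ideal S).jacobson → ∃ y, y * x = 1 := fun x hx => by
    obtain ⟨y, hy⟩ := Ideal.exists_mul_sub_mem_of_sub_one_mem_jacobson x hx
    exact ⟨y, sub_eq_zero.mp ((Submodule.mem_bot S).mp hy)⟩
  obtain ⟨s, hs⟩ := left_inv r h
  -- `s - 1 = -s (r - 1)`, so `s` has a left inverse as well, which must then be `r`.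
  have hs1 : s - 1 ∈ (⊥ : Ideal S).jacobson := by
    have : s - 1 = -(s * (r - 1)) := by rw [mul_sub, hs, mul_one]; abel
    exact this ▸ neg_mem (Ideal.mul_mem_left _ s h)
  obtain ⟨w, hw⟩ := left_inv s hs1
  have hwr : w = r := by rw [← mul_one w, ← hs, ← mul_assoc, hw, one_mul]
  exact ⟨⟨r, s, hwr ▸ hw, hs⟩, rfl⟩

variable {I J : AddSubgroup S}

theorem exists_isIdempotentElem_mem_sub_mem_jacobson (hI : ∀ x ∈ I, ∀ r : S, x * r ∈ I)
    {ε₀ a : S} (hε₀ : IsIdempotentElem ε₀) (ha : a ∈ I)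
    (hε₀a : ε₀ - a ∈ (⊥ : Ideal S).jacobson) :
    ∃ ε : S, IsIdempotentElem ε ∧ ε ∈ I ∧ ε - ε₀ ∈ (⊥ : Ideal S).jacobson := by
  set x := a * ε₀
  -- `u := 1 - ε₀ + x` is a unit with `u ε₀ = x`, and `u ε₀ u⁻¹ = x u⁻¹` is the idempotent.
  have hu : (1 - ε₀ + x) - 1 ∈ (⊥ : Ideal S).jacobson := by
    have : (1 - ε₀ + x) - 1 = -((ε₀ - a) * ε₀) := by rw [sub_mul, hε₀.eq]; abel
    exact this ▸ neg_mem (Ideal.mul_mem_right ε₀ _ hε₀a)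
  obtain ⟨U, hU⟩ := isUnit_of_sub_one_mem_jacobson_bot hu
  have hUε₀ : (U : S) * ε₀ = x := by
    rw [hU, add_mul, sub_mul, one_mul, hε₀.eq, sub_self, zero_add, mul_assoc, hε₀.eq]
  refine ⟨U * ε₀ * U⁻¹, ?_, hUε₀ ▸ hI x (hI a ha ε₀) _, ?_⟩
  · change _ = _
    calc (U : S) * ε₀ * ↑U⁻¹ * (U * ε₀ * ↑U⁻¹) = U * (ε₀ * (↑U⁻¹ * U) * ε₀) * ↑U⁻¹ := by
          noncomm_ring
      _ = U * ε₀ * ↑U⁻¹ := by rw [U.inv_mul, mul_one, hε₀.eq, mul_assoc]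
  · have hU1 : (U : S) - 1 ∈ (⊥ : Ideal S).jacobson := hU ▸ hu
    have : (U : S) * ε₀ * ↑U⁻¹ - ε₀ = ((U - 1) * ε₀ - ε₀ * (U - 1)) * ↑U⁻¹ := by
      rw [show ((U : S) - 1) * ε₀ - ε₀ * (U - 1) = U * ε₀ - ε₀ * U by noncomm_ring, sub_mul,
        mul_assoc ε₀, U.mul_inv, mul_one]
    exact this ▸ Ideal.mul_mem_right _ _
      (sub_mem (Ideal.mul_mem_right _ _ hU1) (Ideal.mul_mem_left _ _ hU1))

theorem exists_isIdempotentElem_one_sub_mem_and_corner_mem_jacobson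
    (hI : ∀ x ∈ I, ∀ r : S, x * r ∈ I) (hJ : ∀ x ∈ J, ∀ r : S, x * r ∈ J)
    (hlift : ∀ g : S, g * g - g ∈ (⊥ : Ideal S).jacobson →
      ∃ e : S, IsIdempotentElem e ∧ e - g ∈ (⊥ : Ideal S).jacobson)
    {a b : S} (ha : a ∈ I) (hb : b ∈ J) (hab : a + b = 1)
    (hIJ : ∀ g : S, g ∈ I → g ∈ J → g ∈ (⊥ : Ideal S).jacobson) :
    ∃ e : S, IsIdempotentElem e ∧ 1 - e ∈ I ∧
      ∀ y ∈ I, e * y * e ∈ (⊥ : Ideal S).jacobson := by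
  obtain rfl : b = 1 - a := eq_sub_of_add_eq' hab
  have hbb : (1 - a) * (1 - a) - (1 - a) ∈ (⊥ : Ideal S).jacobson := by
    have : (1 - a) * (1 - a) - (1 - a) = a * a - a := by noncomm_ring
    exact hIJ _ (this ▸ sub_mem (hI a ha a) ha) (sub_mem (hJ _ hb _) hb)
  obtain ⟨g, hg, hgb⟩ := hlift _ hbb
  obtain ⟨ε, hε, hεI, hεε₀⟩ := exists_isIdempotentElem_mem_sub_mem_jacobson hI hg.one_sub ha
    (by rw [show 1 - g - a = -(g - (1 - a)) by abel]; exact neg_mem hgb)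
  refine ⟨1 - ε, hε.one_sub, by rwa [sub_sub_cancel], fun y hy => ?_⟩
  have heb : 1 - ε - (1 - a) ∈ (⊥ : Ideal S).jacobson := by
    rw [show 1 - ε - (1 - a) = (g - (1 - a)) - (ε - (1 - g)) by abel]
    exact sub_mem hgb hεε₀
  -- `(1 - a) y (1 - a)` lies in `I ∩ J`, and `1 - ε` agrees with `1 - a` modulo the radical.
  have hbyb : (1 - a) * (y * (1 - a)) ∈ (⊥ : Ideal S).jacobson := by
    refine hIJ _ ?_ (hJ _ hb _)
    rw [sub_mul, one_mul]
    exact sub_mem (hI y hy _) (hI a ha _)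
  have : (1 - ε) * y * (1 - ε) = (1 - ε - (1 - a)) * (y * (1 - ε)) +
      (1 - a) * (y * (1 - ε - (1 - a))) + (1 - a) * (y * (1 - a)) := by noncomm_ring
  rw [this]
  exact add_mem (add_mem (Ideal.mul_mem_right _ _ heb)
    (Ideal.mul_mem_left _ _ (Ideal.mul_mem_left _ _ heb))) hbyb

end JacobsonRadical

namespace LinearMap

section EndAnnihilator

variable {C A : Type*} [AddCommGroup C] [Module R C] [AddCommGroup A] [Module R A]

def endAnnihilator (f : C →ₗ[R] A) : AddSubgroup (Module.End R C) where
  carrier := {g | f ∘ₗ g = 0}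
  zero_mem' := comp_zero f
  add_mem' {g g'} hg hg' := by simp_all [comp_add]
  neg_mem' {g} hg := by simp_all [comp_neg]

variable {f : C →ₗ[R] A}

@[simp]
theorem mem_endAnnihilator {g : Module.End R C} : g ∈ f.endAnnihilator ↔ f ∘ₗ g = 0 :=
  Iff.rfl

theorem mul_mem_endAnnihilator {g : Module.End R C} (hg : g ∈ f.endAnnihilator)
    (r : Module.End R C) : g * r ∈ f.endAnnihilator := by
  rw [mem_endAnnihilator, Module.End.mul_eq_comp, ← comp_assoc, mem_endAnnihilator.mp hg,
    zero_comp]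

theorem one_sub_mem_endAnnihilator_iff {e : Module.End R C} :
    1 - e ∈ f.endAnnihilator ↔ f ∘ₗ e = f := by
  rw [mem_endAnnihilator, comp_sub, Module.End.one_eq_id, comp_id, sub_eq_zero, eq_comm]

end EndAnnihilator

end LinearMap

open LinearMap

def IsPrecover (𝒞 : (N : Type u) → [AddCommGroup N] → [Module R N] → Prop)
    {C A : Type u} [AddCommGroup C] [Module R C] [AddCommGroup A] [Module R A]
    (f : C →ₗ[R] A) : Prop :=
  ∀ (C' : Type u) (_ : AddCommGroup C') (_ : Module R C') (g : C' →ₗ[R] A),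
    𝒞 C' → ∃ h : C' →ₗ[R] C, f ∘ₗ h = g

def IsRightMinimal {C A : Type*} [AddCommGroup C] [Module R C] [AddCommGroup A] [Module R A]
    (f : C →ₗ[R] A) : Prop :=
  ∀ h : Module.End R C, f ∘ₗ h = f → Function.Bijective h

namespace IsIdempotentElem

section Summand

variable {C : Type u} [AddCommGroup C] [Module R C] {e : Module.End R C}

theorem isDirectSummandOf_range (he : IsIdempotentElem e) :
    IsDirectSummandOf R (range e) C :=
  ⟨(range e).subtype, he.isProj_range.codRestrict,
    LinearMap.ext he.isProj_range.codRestrict_apply_cod⟩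

theorem isPrecover_comp_subtype_range
    {𝒞 : (N : Type u) → [AddCommGroup N] → [Module R N] → Prop} {A : Type u} [AddCommGroup A]
    [Module R A] {f : C →ₗ[R] A} (hf : IsPrecover 𝒞 f) (he : IsIdempotentElem e)
    (hfe : f ∘ₗ e = f) : IsPrecover 𝒞 (f ∘ₗ (range e).subtype) := by
  intro C' _ _ g hg
  obtain ⟨h, rfl⟩ := hf C' _ _ g hg
  exact ⟨he.isProj_range.codRestrict ∘ₗ h, congrArg (· ∘ₗ h) hfe⟩

end Summand

variable {C : Type*} [AddCommGroup C] [Module R C] {e : Module.End R C}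

-- The unit acts as `h` on `range e` and as the identity on `ker e`.
theorem bijective_of_isUnit_one_sub_sub (he : IsIdempotentElem e) {h : Module.End R (range e)}
    (hu : IsUnit (1 - (e - (range e).subtype ∘ₗ h ∘ₗ he.isProj_range.codRestrict))) :
    Function.Bijective h := by
  set i := (range e).subtype
  set p := he.isProj_range.codRestrict
  set s := 1 - (e - i ∘ₗ h ∘ₗ p)
  have hs : Function.Bijective s := (Module.End.isUnit_iff s).mp hu
  have hsi : ∀ d, s (i d) = i (h d) := fun d => by
    simp [s, i, p, he.isProj_range.map_id _ d.2]
  have hes : ∀ c, e (s c) = i (h (p c)) := fun c => by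
    simp [s, i, p, he.isProj_range.map_id _ (h _).2, ← Module.End.mul_apply, he.eq]
  refine ⟨fun d₁ d₂ hd => Subtype.ext (hs.1 (show s (i d₁) = s (i d₂) by rw [hsi, hsi, hd])),
    fun d => ?_⟩
  obtain ⟨c, hc⟩ := hs.2 (i d)
  refine ⟨p c, Subtype.ext (show i (h (p c)) = i d from ?_)⟩
  rw [← hes, hc]
  exact he.isProj_range.map_id _ d.2

theorem isRightMinimal_comp_subtype_range {A : Type*} [AddCommGroup A] [Module R A]
    {f : C →ₗ[R] A} (he : IsIdempotentElem e) (hfe : f ∘ₗ e = f)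
    (hcorner : ∀ y ∈ f.endAnnihilator, e * y * e ∈ (⊥ : Ideal (Module.End R C)).jacobson) :
    IsRightMinimal (f ∘ₗ (range e).subtype) := by
  intro h hh
  set p := he.isProj_range.codRestrict
  set t := (range e).subtype ∘ₗ h ∘ₗ p
  have hft : f ∘ₗ t = f := (congrArg (· ∘ₗ p) hh).trans hfe
  have het : e * t = t := LinearMap.ext fun c => he.isProj_range.map_id _ (h _).2
  have hpe : p ∘ₗ e = p := LinearMap.ext fun c => Subtype.ext <| by
    simp [p, ← Module.End.mul_apply, he.eq]
  have hte : t * e = t := by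
    rw [Module.End.mul_eq_comp, comp_assoc, comp_assoc, hpe]
  have hJac : e - t ∈ (⊥ : Ideal (Module.End R C)).jacobson := by
    have hI : e - t ∈ f.endAnnihilator := by
      rw [mem_endAnnihilator, comp_sub, hfe, hft, sub_self]
    have := hcorner _ hI
    rwa [mul_sub, he.eq, het, sub_mul, he.eq, hte] at this
  refine he.bijective_of_isUnit_one_sub_sub (isUnit_of_sub_one_mem_jacobson_bot ?_)
  rw [sub_sub_cancel_left]
  exact neg_mem hJac

end IsIdempotentElem

theorem cover_of_precover_semiregular_general
    (𝒞 : (N : Type u) → [AddCommGroup N] → [Module R N] → Prop)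
    (hsummand : ∀ (X Y : Type u) (_ : AddCommGroup X) (_ : AddCommGroup Y)
      (_ : Module R X) (_ : Module R Y), 𝒞 Y → IsDirectSummandOf R X Y → 𝒞 X)
    (A C : Type u) [AddCommGroup A] [Module R A] [AddCommGroup C] [Module R C]
    (f : C →ₗ[R] A) (hC : 𝒞 C)
    (hprecover : ∀ (C' : Type u) (_ : AddCommGroup C') (_ : Module R C') (g : C' →ₗ[R] A),
      𝒞 C' → ∃ h : C' →ₗ[R] C, f.comp h = g)
    (hidem : ∀ g : Module.End R C, g * g - g ∈ (⊥ : Ideal (Module.End R C)).jacobson →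
      ∃ e : Module.End R C, IsIdempotentElem e ∧ e - g ∈ (⊥ : Ideal (Module.End R C)).jacobson)
    (J : AddSubgroup (Module.End R C))
    (hJright : ∀ a ∈ J, ∀ r : Module.End R C, a * r ∈ J)
    (hIJ_top : ∀ g : Module.End R C, ∃ a b : Module.End R C,
      f.comp a = 0 ∧ b ∈ J ∧ g = a + b)
    (hIJ_rad : ∀ g : Module.End R C, f.comp g = 0 → g ∈ J →
      g ∈ (⊥ : Ideal (Module.End R C)).jacobson) :
    ∃ (D : Type u) (_ : AddCommGroup D) (_ : Module R D) (f' : D →ₗ[R] A), 𝒞 D ∧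
      (∀ (C' : Type u) (_ : AddCommGroup C') (_ : Module R C') (g : C' →ₗ[R] A),
        𝒞 C' → ∃ h : C' →ₗ[R] D, f'.comp h = g) ∧
      ∀ h : D →ₗ[R] D, f'.comp h = f' → Function.Bijective h := by
  obtain ⟨a, b, ha, hb, hab⟩ := hIJ_top 1
  obtain ⟨e, he, hfe, hcorner⟩ :=
    exists_isIdempotentElem_one_sub_mem_and_corner_mem_jacobson (I := f.endAnnihilator)
      (fun _ => mul_mem_endAnnihilator) hJright hidem ha hb hab.symm hIJ_rad
  rw [one_sub_mem_endAnnihilator_iff] at hfe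
  exact ⟨range e, inferInstance, inferInstance, f ∘ₗ (range e).subtype,
    hsummand _ _ _ _ _ _ hC he.isDirectSummandOf_range,
    he.isPrecover_comp_subtype_range (𝒞 := 𝒞) hprecover hfe,
    he.isRightMinimal_comp_subtype_range hfe hcorner⟩

/-- If `𝒞` is closed under finite direct sums and direct summands, `f : C → A` is a
`𝒞`-precover, idempotents of `End(C)` lift modulo the Jacobson radical, and the right ideal
`I = {g : f ∘ g = 0}` has a complement `J` up to the radical (`I + J = End(C)` and
`I ∩ J ⊆ J(End C)`), then `A` has a `𝒞`-cover. -/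
theorem cover_of_precover_semiregular
    (𝒞 : (N : Type u) → [AddCommGroup N] → [Module R N] → Prop)
    (hsum : ∀ (X Y : Type u) (_ : AddCommGroup X) (_ : AddCommGroup Y)
      (_ : Module R X) (_ : Module R Y), 𝒞 X → 𝒞 Y → 𝒞 (X × Y))
    (hsummand : ∀ (X Y : Type u) (_ : AddCommGroup X) (_ : AddCommGroup Y)
      (_ : Module R X) (_ : Module R Y), 𝒞 Y → IsDirectSummandOf R X Y → 𝒞 X)
    (A C : Type u) [AddCommGroup A] [Module R A] [AddCommGroup C] [Module R C]
    (f : C →ₗ[R] A) (hC : 𝒞 C)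
    (hprecover : ∀ (C' : Type u) (_ : AddCommGroup C') (_ : Module R C') (g : C' →ₗ[R] A),
      𝒞 C' → ∃ h : C' →ₗ[R] C, f.comp h = g)
    (hidem : ∀ g : Module.End R C, g * g - g ∈ (⊥ : Ideal (Module.End R C)).jacobson →
      ∃ e : Module.End R C, IsIdempotentElem e ∧ e - g ∈ (⊥ : Ideal (Module.End R C)).jacobson)
    (J : AddSubgroup (Module.End R C))
    (hJright : ∀ a ∈ J, ∀ r : Module.End R C, a * r ∈ J)
    (hIJ_top : ∀ g : Module.End R C, ∃ a b : Module.End R C,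
      f.comp a = 0 ∧ b ∈ J ∧ g = a + b)
    (hIJ_rad : ∀ g : Module.End R C, f.comp g = 0 → g ∈ J →
      g ∈ (⊥ : Ideal (Module.End R C)).jacobson) :
    ∃ (D : Type u) (_ : AddCommGroup D) (_ : Module R D) (f' : D →ₗ[R] A), 𝒞 D ∧
      (∀ (C' : Type u) (_ : AddCommGroup C') (_ : Module R C') (g : C' →ₗ[R] A),
        𝒞 C' → ∃ h : C' →ₗ[R] D, f'.comp h = g) ∧
      ∀ h : D →ₗ[R] D, f'.comp h = f' → Function.Bijective h :=
  cover_of_precover_semiregular_general 𝒞 hsummand A C f hC hprecover hidem J hJright hIJ_top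
    hIJ_rad
end

section
/- Let R be a ring and M an R-module. If Prod(M) ⊆ Add(M), then M is Σ-pure-injective. -/
/-!
Traces `{h ξ | h : X →ₗ[R] N}` of pointed modules play the role of pp-definable subgroups.
If `Prod(M) ⊆ Add(M)`, traces in `M` satisfy the descending chain condition: otherwise the
product `∏_{ℕ × (ℕ → M)} M` is a retract of some `⨁_J M`, Chase's argument shows that a tail of
the product is sent into every trace outside finitely many coordinates of `⨁_J M`, and then the
`2 ^ |ℕ → M|` indicator families at one level of the product would be distinguished by finitely
many coordinates modulo a trace, contradicting Cantor's theorem. The chain condition passes to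
`⨁_J M` coordinatewise and makes a module algebraically compact (Zorn's lemma, choosing each new
value in the least coset of values of finite subsystems), and a pure monomorphism `K → L`
turns an extension problem into a finitely solvable system on the free module `L →₀ R`.
-/
universe u

open DirectSum

section PointedTrace

variable {R : Type u} [Ring R]

variable (R) in
/-- For finitely presented `X`, these are exactly the pp-definable subgroups of `N`. -/
def pointedTrace (X : Type*) [AddCommGroup X] [Module R X] (ξ : X)
    (N : Type*) [AddCommGroup N] [Module R N] : AddSubgroup N :=
  (LinearMap.evalAddMonoidHom ξ : (X →ₗ[R] N) →+ N).range

variable {X X' N N' : Type*} [AddCommGroup X] [Module R X] [AddCommGroup X'] [Module R X']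
  [AddCommGroup N] [Module R N] [AddCommGroup N'] [Module R N'] {ξ : X}

theorem pointedTrace_map (u : N →ₗ[R] N') {y : N} (hy : y ∈ pointedTrace R X ξ N) :
    u y ∈ pointedTrace R X ξ N' := by
  obtain ⟨h, rfl⟩ := hy
  exact ⟨u ∘ₗ h, rfl⟩

theorem pointedTrace_le_of_map (ρ : X →ₗ[R] X') {ξ' : X'} (hρ : ρ ξ = ξ') :
    pointedTrace R X' ξ' N ≤ pointedTrace R X ξ N := by
  rintro y ⟨h, rfl⟩
  exact ⟨h ∘ₗ ρ, by simp [hρ]⟩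

theorem mem_pointedTrace_pi_iff {ι : Type*} {x : ι → N} :
    x ∈ pointedTrace R X ξ (ι → N) ↔ ∀ i, x i ∈ pointedTrace R X ξ N := by
  refine ⟨fun hx i => pointedTrace_map (LinearMap.proj i) hx, fun hx => ?_⟩
  choose h hh using hx
  exact ⟨LinearMap.pi h, funext hh⟩

theorem mem_pointedTrace_directSum_iff {J : Type*} {y : ⨁ _ : J, N} :
    y ∈ pointedTrace R X ξ (⨁ _ : J, N) ↔ ∀ j, y j ∈ pointedTrace R X ξ N := by
  classical
  refine ⟨fun hy j => pointedTrace_map (DirectSum.component R J _ j) hy, fun hy => ?_⟩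
  rw [← DirectSum.sum_support_of y]
  refine AddSubgroup.sum_mem _ fun j _ => ?_
  simpa [DirectSum.lof_eq_of] using pointedTrace_map (DirectSum.lof R J (fun _ => N) j) (hy j)

theorem mem_pointedTrace_quotient_iff {F : Type*} [AddCommGroup F] [Module R F]
    {W : Submodule R F} {w₀ : F} {y : N} :
    y ∈ pointedTrace R (F ⧸ W) (W.mkQ w₀) N ↔
      ∃ φ : F →ₗ[R] N, W ≤ LinearMap.ker φ ∧ φ w₀ = y := by
  refine ⟨fun ⟨h, hy⟩ => ⟨h ∘ₗ W.mkQ, fun w hw => ?_, hy⟩,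
    fun ⟨φ, hφ, hy⟩ => ⟨W.liftQ φ hφ, hy⟩⟩
  simp [(Submodule.Quotient.mk_eq_zero W).2 hw]

end PointedTrace

structure PointedChain (R : Type u) [Ring R] where
  X : ℕ → Type u
  [addCommGroup : ∀ n, AddCommGroup (X n)]
  [module : ∀ n, Module R (X n)]
  pt : ∀ n, X n
  map : ∀ n, X n →ₗ[R] X (n + 1)
  map_pt : ∀ n, map n (pt n) = pt (n + 1)

attribute [instance] PointedChain.addCommGroup PointedChain.module

namespace PointedChain

variable {R : Type u} [Ring R] (c : PointedChain R)

def trace (n : ℕ) (N : Type u) [AddCommGroup N] [Module R N] : AddSubgroup N :=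
  pointedTrace R (c.X n) (c.pt n) N

theorem trace_antitone (N : Type u) [AddCommGroup N] [Module R N] :
    Antitone fun n => c.trace n N :=
  antitone_nat_of_succ_le fun n => pointedTrace_le_of_map (c.map n) (c.map_pt n)

def ofQuotients {F : Type u} [AddCommGroup F] [Module R F] (W : ℕ → Submodule R F)
    (hW : Monotone W) (w₀ : F) : PointedChain R where
  X n := F ⧸ W n
  pt n := (W n).mkQ w₀
  map n := Submodule.factor (hW n.le_succ)
  map_pt _ := rfl

end PointedChain

/-- Equivalent to the descending chain condition on traces: pass to a subchain. -/
def TraceDCC (R : Type u) [Ring R] (N : Type u) [AddCommGroup N] [Module R N] : Prop :=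
  ∀ c : PointedChain R, ∃ n, c.trace n N ≤ c.trace (n + 1) N

theorem TraceDCC.directSum {R : Type u} [Ring R] {N : Type u} [AddCommGroup N] [Module R N]
    (hN : TraceDCC R N) (J : Type u) : TraceDCC R (⨁ _ : J, N) := fun c => by
  obtain ⟨n, hn⟩ := hN c
  exact ⟨n, fun y hy => mem_pointedTrace_directSum_iff.2 fun j =>
    hn (mem_pointedTrace_directSum_iff.1 hy j)⟩

section Chase

open Finset

variable {M : Type*} [AddCommGroup M] (G : ℕ → AddSubgroup M) (A : Type*)

def tailSubgroup (k : ℕ) : AddSubgroup (ℕ × A → M) where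
  carrier := {x | ∀ q, (q.1 < k → x q = 0) ∧ x q ∈ G q.1}
  zero_mem' q := ⟨fun _ => rfl, zero_mem _⟩
  add_mem' {x y} hx hy q :=
    ⟨fun h => by simp [(hx q).1 h, (hy q).1 h], add_mem (hx q).2 (hy q).2⟩
  neg_mem' {x} hx q := ⟨fun h => by simp [(hx q).1 h], neg_mem (hx q).2⟩

variable {G A}

theorem mem_of_mem_tailSubgroup (hG : Antitone G) {k : ℕ} {x : ℕ × A → M}
    (hx : x ∈ tailSubgroup G A k) (q : ℕ × A) : x q ∈ G k := by
  by_cases hq : q.1 < k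
  · simp [(hx q).1 hq]
  · exact hG (not_lt.1 hq) (hx q).2

/-- The sum `∑ b, x b`, which is finite at each level when `x b` vanishes below level `b`. -/
def levelSum (x : ℕ → ℕ × A → M) : ℕ × A → M :=
  fun q => ∑ b ∈ range (q.1 + 1), x b q

theorem levelSum_sub_sum_range_mem {x : ℕ → ℕ × A → M} {K : ℕ → ℕ} (hK : StrictMono K)
    (hx : ∀ b, x b ∈ tailSubgroup G A (K b)) (m : ℕ) :
    levelSum x - ∑ b ∈ range m, x b ∈ tailSubgroup G A (K m) := by
  intro q
  have hvan : ∀ b, q.1 < K b → x b q = 0 := fun b hb => ((hx b) q).1 hb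
  have hsum : ∀ n n', n ≤ n' → (∀ b, n ≤ b → q.1 < K b) →
      ∑ b ∈ range n, x b q = ∑ b ∈ range n', x b q := fun n n' hn h =>
    sum_subset (range_mono hn) fun b _ hb => hvan b (h b (not_lt.1 (mem_range.not.1 hb)))
  simp only [levelSum, Pi.sub_apply, Finset.sum_apply]
  refine ⟨fun hq => ?_,
    sub_mem (sum_mem fun b _ => ((hx b) q).2) (sum_mem fun b _ => ((hx b) q).2)⟩
  rw [hsum (q.1 + 1) (q.1 + 1 + m) (by omega)
      (fun b hb => (Nat.lt_of_succ_le hb).trans_le (hK.id_le b)),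
    hsum m (q.1 + 1 + m) (by omega) (fun b hb => hq.trans_le (hK.monotone hb)), sub_self]

variable {J : Type*} (i : (ℕ × A → M) →+ ⨁ _ : J, M)

/-- Chase's argument: the level sum of such a sequence would have infinite support in the
direct sum. -/
theorem false_of_chase_sequence (hi : ∀ k, ∀ x ∈ tailSubgroup G A k, ∀ j, i x j ∈ G k)
    {x : ℕ → ℕ × A → M} {K : ℕ → ℕ} (hK : StrictMono K)
    (hx : ∀ n, x n ∈ tailSubgroup G A (K n))
    {j : ℕ → J} (hj : ∀ n, i (x n) (j n) ∉ G (K (n + 1)))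
    (hjs : ∀ b n, b < n → i (x b) (j n) = 0) : False := by
  have hsupp : ∀ n, i (levelSum x) (j n) ≠ 0 := by
    intro n h0
    have hsplit : i (levelSum x) (j n) = ∑ b ∈ range n, i (x b) (j n) + i (x n) (j n) +
        i (levelSum x - ∑ b ∈ range (n + 1), x b) (j n) := by
      simp [sum_range_succ, map_sum]
    rw [sum_eq_zero fun b hb => hjs b n (mem_range.1 hb), zero_add, h0] at hsplit
    exact hj n (eq_neg_of_add_eq_zero_left hsplit.symm ▸
      neg_mem (hi _ _ (levelSum_sub_sum_range_mem hK hx (n + 1)) _))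
  have hinj : Function.Injective j := by
    refine fun b n hbn => by_contra fun hne => ?_
    rcases lt_or_gt_of_ne hne with h | h
    · exact hj b (by rw [hbn, hjs b n h]; exact zero_mem _)
    · exact hj n (by rw [← hbn, hjs n b h]; exact zero_mem _)
  classical
  exact Set.infinite_range_of_injective hinj <| (i (levelSum x)).support.finite_toSet.subset
    (Set.range_subset_iff.2 fun n => DFinsupp.mem_support_iff.2 (hsupp n))

theorem exists_tailSubgroup_forall_notMem_mem (hG : Antitone G)
    (hi : ∀ k, ∀ x ∈ tailSubgroup G A k, ∀ j, i x j ∈ G k) :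
    ∃ k, ∃ F : Finset J, ∀ x ∈ tailSubgroup G A k, ∀ j ∉ F, ∀ m, i x j ∈ G m := by
  classical
  by_contra! h
  choose x hx j hj m hm using h
  let step : ℕ × Finset J → ℕ × Finset J := fun s =>
    (max (s.1 + 1) (m s.1 s.2), s.2 ∪ (i (x s.1 s.2)).support)
  let st : ℕ → ℕ × Finset J := fun n => step^[n] (0, ∅)
  have hst : ∀ n, st (n + 1) = step (st n) := fun n => Function.iterate_succ_apply' _ _ _
  have hF : Monotone fun n => (st n).2 :=
    monotone_nat_of_le_succ fun n => by rw [hst]; exact subset_union_left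
  refine false_of_chase_sequence i hi (x := fun n => x (st n).1 (st n).2)
    (K := fun n => (st n).1) (strictMono_nat_of_lt_succ fun n => ?_) (fun n => hx _ _)
    (j := fun n => j (st n).1 (st n).2) (fun n hn => hm _ _ (hG ?_ hn))
    fun b n hbn => by_contra fun hne => hj (st n).1 (st n).2 (hF hbn ?_)
  · rw [hst]; exact (lt_add_one _).trans_le (le_max_left _ _)
  · rw [hst]; exact le_max_right _ _
  · show _ ∈ (st (b + 1)).2
    rw [hst]; exact mem_union_right _ (DFinsupp.mem_support_iff.2 hne)

end Chase

theorem not_injective_set_to_pi_of_finite {M F : Type*} [Nonempty M] [Finite F]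
    (Ψ : Set (ℕ → M) → F → M) : ¬ Function.Injective Ψ := by
  obtain ⟨e, he⟩ := exists_injective_nat F
  let ext : (F → M) → ℕ → M := fun v => Function.extend e v fun _ => Classical.arbitrary M
  have hext : Function.Injective ext := fun v v' h =>
    funext fun a => by simpa [ext, he.extend_apply] using congrFun h (e a)
  exact fun hΨ => Function.cantor_injective _ (hext.comp hΨ)

section ChaseRetract

variable {M : Type*} [AddCommGroup M] {G : ℕ → AddSubgroup M} {J : Type*}

/-- A strictly descending chain `G` would give `2 ^ |ℕ → M|` elements of the product that are
already distinguished modulo `G (k + 1)` by finitely many coordinates of the direct sum. -/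
theorem exists_le_succ_of_retract (hG : Antitone G)
    (i : (ℕ × (ℕ → M) → M) →+ ⨁ _ : J, M) (p : (⨁ _ : J, M) →+ (ℕ × (ℕ → M) → M))
    (hpi : ∀ x, p (i x) = x)
    (hi : ∀ k, ∀ x ∈ tailSubgroup G (ℕ → M) k, ∀ j, i x j ∈ G k)
    (hp : ∀ m (y : ⨁ _ : J, M), (∀ j, y j ∈ G m) → ∀ q, p y q ∈ G m) :
    ∃ n, G n ≤ G (n + 1) := by
  by_contra! hno
  obtain ⟨k, F, hkF⟩ := exists_tailSubgroup_forall_notMem_mem i hG hi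
  obtain ⟨b, hbk, hbk1⟩ := SetLike.not_le_iff_exists.1 (hno k)
  let x : Set (ℕ → M) → ℕ × (ℕ → M) → M := fun S => ({k} ×ˢ S).indicator fun _ => b
  have hx : ∀ S, x S ∈ tailSubgroup G (ℕ → M) k := by
    intro S q
    by_cases hq : q ∈ ({k} ×ˢ S : Set _)
    · simp only [x, Set.indicator_of_mem hq]
      exact ⟨fun h => absurd (Set.mem_prod.1 hq).1 h.ne, (Set.mem_prod.1 hq).1 ▸ hbk⟩
    · simp [x, Set.indicator_of_notMem hq]
  have hsubset : ∀ S S', (∀ j ∈ F, i (x S) j - i (x S') j ∈ G (k + 1)) → S ⊆ S' := by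
    intro S S' hSS' α hα
    by_contra hα'
    have hy : ∀ j, i (x S - x S') j ∈ G (k + 1) := fun j => by
      by_cases hj : j ∈ F
      · simpa using hSS' j hj
      · exact hkF _ (sub_mem (hx S) (hx S')) j hj (k + 1)
    have hval : (x S - x S') (k, α) = b := by simp [x, hα, hα']
    exact hbk1 (hval ▸ hpi (x S - x S') ▸ hp (k + 1) _ hy (k, α))
  refine not_injective_set_to_pi_of_finite (F := F)
    (fun S j => (QuotientAddGroup.mk (i (x S) j) : M ⧸ G (k + 1)).out) fun S S' h => ?_
  have hmod : ∀ j ∈ F, i (x S) j - i (x S') j ∈ G (k + 1) := fun j hj => by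
    have := Quotient.out_injective (congrFun h ⟨j, hj⟩)
    rw [QuotientAddGroup.eq] at this
    simpa [neg_add_eq_sub] using neg_mem this
  exact (hsubset S S' hmod).antisymm (hsubset S' S fun j hj => by
    simpa using neg_mem (hmod j hj))

end ChaseRetract

theorem traceDCC_of_prod_subset_add {R : Type u} [Ring R] (M : Type u) [AddCommGroup M]
    [Module R M] (hsub : ∀ (X : Type u) (_ : AddCommGroup X) (_ : Module R X),
      MemProd R M X → MemAdd R M X) : TraceDCC R M := by
  intro c
  obtain ⟨J, i, p, hpi⟩ := hsub (ℕ × (ℕ → M) → M) inferInstance inferInstance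
    ⟨_, LinearMap.id, LinearMap.id, rfl⟩
  refine exists_le_succ_of_retract (c.trace_antitone M) i.toAddMonoidHom p.toAddMonoidHom
    (LinearMap.congr_fun hpi) (fun k x hx j => ?_) fun m y hy q => ?_
  · have hxk : x ∈ c.trace k _ := mem_pointedTrace_pi_iff.2
      (mem_of_mem_tailSubgroup (c.trace_antitone M) hx)
    exact mem_pointedTrace_directSum_iff.1 (pointedTrace_map i hxk) j
  · exact mem_pointedTrace_pi_iff.1
      (pointedTrace_map p (mem_pointedTrace_directSum_iff.2 hy)) q

theorem exists_forall_le_of_forall_monotone {ι β : Type*} [Preorder ι] [IsDirected ι (· ≤ ·)]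
    [Nonempty ι] [Preorder β] {s : ι → β} (hs : Antitone s)
    (hseq : ∀ u : ℕ → ι, Monotone u → ∃ n, s (u n) ≤ s (u (n + 1))) :
    ∃ i, ∀ j, s i ≤ s j := by
  by_contra! h
  have hstep : ∀ i, ∃ k, i ≤ k ∧ ¬ s i ≤ s k := fun i => by
    obtain ⟨j, hj⟩ := h i
    obtain ⟨k, hik, hjk⟩ := directed_of (· ≤ ·) i j
    exact ⟨k, hik, fun hk => hj (hk.trans (hs hjk))⟩
  choose next hle hlt using hstep
  let u : ℕ → ι := fun n => next^[n] (Classical.arbitrary ι)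
  have hu : ∀ n, u (n + 1) = next (u n) := fun n => Function.iterate_succ_apply' _ _ _
  obtain ⟨n, hn⟩ := hseq u (monotone_nat_of_le_succ fun n => hu n ▸ hle _)
  exact hlt _ (hu n ▸ hn)

section Solvable

variable (R : Type u) [Ring R] {F N : Type u} [AddCommGroup F] [Module R F]
  [AddCommGroup N] [Module R N]

/-- `S` encodes the system of equations `φ w = c`, `(w, c) ∈ S`, in the unknown
`φ : F →ₗ[R] N`. -/
def IsFinitelySolvable (S : Set (F × N)) : Prop :=
  ∀ T : Finset (F × N), ↑T ⊆ S → ∃ φ : F →ₗ[R] N, ∀ p ∈ T, φ p.1 = p.2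

def solutionValues (T : Set (F × N)) (w₀ : F) : Set N :=
  {y | ∃ φ : F →ₗ[R] N, (∀ p ∈ T, φ p.1 = p.2) ∧ φ w₀ = y}

variable {R}

theorem solutionValues_anti (w₀ : F) : Antitone fun T : Set (F × N) => solutionValues R T w₀ :=
  fun _ _ hTT' _ ⟨φ, hφ, hy⟩ => ⟨φ, fun p hp => hφ p (hTT' hp), hy⟩

/-- `solutionValues R T w₀` is a coset of the trace of `(F ⧸ ⟨w | (w, c) ∈ T⟩, w₀)`. -/
theorem sub_mem_pointedTrace_of_mem_solutionValues {T : Set (F × N)} {w₀ : F} {y y' : N}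
    (hy : y ∈ solutionValues R T w₀) (hy' : y' ∈ solutionValues R T w₀) :
    y - y' ∈ pointedTrace R (F ⧸ Submodule.span R (Prod.fst '' T))
      ((Submodule.span R (Prod.fst '' T)).mkQ w₀) N := by
  obtain ⟨φ, hφ, rfl⟩ := hy
  obtain ⟨φ', hφ', rfl⟩ := hy'
  refine mem_pointedTrace_quotient_iff.2 ⟨φ - φ', Submodule.span_le.2 ?_, rfl⟩
  rintro _ ⟨p, hp, rfl⟩
  simp [hφ p hp, hφ' p hp]

theorem add_mem_solutionValues {T : Set (F × N)} {w₀ : F} {y z : N}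
    (hy : y ∈ solutionValues R T w₀)
    (hz : z ∈ pointedTrace R (F ⧸ Submodule.span R (Prod.fst '' T))
      ((Submodule.span R (Prod.fst '' T)).mkQ w₀) N) :
    y + z ∈ solutionValues R T w₀ := by
  obtain ⟨φ, hφ, rfl⟩ := hy
  obtain ⟨χ, hχ, rfl⟩ := mem_pointedTrace_quotient_iff.1 hz
  refine ⟨φ + χ, fun p hp => ?_, rfl⟩
  simp [hφ p hp, LinearMap.mem_ker.1 (hχ (Submodule.subset_span ⟨p, hp, rfl⟩))]

theorem TraceDCC.exists_solutionValues_subset_succ (hN : TraceDCC R N) {u : ℕ → Set (F × N)}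
    (hu : Monotone u) (w₀ : F) (hne : ∀ n, (solutionValues R (u n) w₀).Nonempty) :
    ∃ n, solutionValues R (u n) w₀ ⊆ solutionValues R (u (n + 1)) w₀ := by
  obtain ⟨n, hn⟩ := hN (.ofQuotients (fun n => Submodule.span R (Prod.fst '' u n))
    (fun _ _ h => Submodule.span_mono (Set.image_mono (hu h))) w₀)
  refine ⟨n, fun y hy => ?_⟩
  obtain ⟨y₀, hy₀⟩ := hne (n + 1)
  have hyy₀ := hn (sub_mem_pointedTrace_of_mem_solutionValues hy
    (solutionValues_anti w₀ (hu n.le_succ) hy₀))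
  simpa using add_mem_solutionValues hy₀ hyy₀

/-- The values at `w₀` of the solutions of finite subsystems have a least element; it can be
added to the system. -/
theorem IsFinitelySolvable.exists_insert (hN : TraceDCC R N) {S : Set (F × N)}
    (hS : IsFinitelySolvable R S) (w₀ : F) : ∃ c, IsFinitelySolvable R (insert (w₀, c) S) := by
  classical
  let ι := {T : Finset (F × N) // ↑T ⊆ S}
  have : Nonempty ι := ⟨⟨∅, by simp⟩⟩
  have : IsDirected ι (· ≤ ·) := ⟨fun T T' => ⟨⟨T.1 ∪ T'.1, by
    simpa using Set.union_subset T.2 T'.2⟩, Finset.subset_union_left, Finset.subset_union_right⟩⟩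
  have hne : ∀ T : ι, (solutionValues R (↑T.1 : Set (F × N)) w₀).Nonempty := fun T => by
    obtain ⟨φ, hφ⟩ := hS T.1 T.2
    exact ⟨φ w₀, φ, hφ, rfl⟩
  obtain ⟨T₀, hT₀⟩ := exists_forall_le_of_forall_monotone
    (s := fun T : ι => solutionValues R (↑T.1 : Set (F × N)) w₀)
    (fun _ _ h => solutionValues_anti w₀ (Finset.coe_subset.2 h)) fun u hu =>
      hN.exists_solutionValues_subset_succ (fun _ _ h => Finset.coe_subset.2 (hu h)) w₀
        fun n => hne (u n)
  obtain ⟨c, hc⟩ := hne T₀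
  refine ⟨c, fun T hT => ?_⟩
  obtain ⟨φ, hφ, hφc⟩ := hT₀ ⟨T.erase (w₀, c), fun p hp => by
    simpa [(Finset.mem_erase.1 hp).1] using hT (Finset.mem_erase.1 hp).2⟩ hc
  refine ⟨φ, fun p hp => ?_⟩
  by_cases hpc : p = (w₀, c)
  · subst hpc; exact hφc
  · exact hφ p (Finset.mem_erase.2 ⟨hpc, hp⟩)

theorem IsFinitelySolvable.sUnion {C : Set (Set (F × N))} (hC : IsChain (· ⊆ ·) C)
    (hne : C.Nonempty) (hsolv : ∀ S ∈ C, IsFinitelySolvable R S) :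
    IsFinitelySolvable R (⋃₀ C) := fun T hT => by
  obtain ⟨S, hS, hTS⟩ :=
    hC.directedOn.exists_mem_subset_of_finite_of_subset_sUnion hne T.finite_toSet hT
  exact hsolv S hS T hTS

theorem IsFinitelySolvable.exists_linearMap_of_forall_exists {S : Set (F × N)}
    (hS : IsFinitelySolvable R S) (htot : ∀ w, ∃ c, (w, c) ∈ S) :
    ∃ φ : F →ₗ[R] N, ∀ p ∈ S, φ p.1 = p.2 := by
  classical
  choose c hc using htot
  have hfin : ∀ (T : Finset F) (p : F × N), p ∈ S →
      ∃ φ : F →ₗ[R] N, φ p.1 = p.2 ∧ ∀ w ∈ T, φ w = c w := fun T p hp => by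
    obtain ⟨φ, hφ⟩ := hS (insert p (T.image fun w => (w, c w))) (by
      simpa [Set.insert_subset_iff, Set.subset_def, hp] using fun w _ => hc w)
    exact ⟨φ, hφ p (by simp), fun w hw => hφ (w, c w) (by simp [hw])⟩
  refine ⟨{ toFun := c, map_add' := fun w w' => ?_, map_smul' := fun r w => ?_ },
    fun p hp => ?_⟩
  · obtain ⟨φ, -, hφ⟩ := hfin {w, w', w + w'} (0, c 0) (hc 0)
    simp [← hφ (w + w') (by simp), hφ w (by simp), hφ w' (by simp)]
  · obtain ⟨φ, -, hφ⟩ := hfin {w, r • w} (0, c 0) (hc 0)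
    simp [← hφ (r • w) (by simp), hφ w (by simp)]
  · obtain ⟨φ, hφp, hφ⟩ := hfin {p.1} p hp
    simp [← hφ p.1 (by simp), hφp]

/-- Algebraic compactness of modules satisfying `TraceDCC`. -/
theorem IsFinitelySolvable.exists_linearMap (hN : TraceDCC R N) {S : Set (F × N)}
    (hS : IsFinitelySolvable R S) : ∃ φ : F →ₗ[R] N, ∀ p ∈ S, φ p.1 = p.2 := by
  obtain ⟨S', hSS', hmax⟩ := zorn_subset_nonempty {S | IsFinitelySolvable R S}
    (fun C hC hchain hne => ⟨⋃₀ C, .sUnion hchain hne hC, fun _ => Set.subset_sUnion_of_mem⟩)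
    S hS
  have htot : ∀ w, ∃ c, (w, c) ∈ S' := fun w => by
    obtain ⟨c, hc⟩ := hmax.prop.exists_insert hN w
    exact ⟨c, hmax.eq_of_subset hc (Set.subset_insert _ _) ▸ Set.mem_insert _ _⟩
  obtain ⟨φ, hφ⟩ := hmax.prop.exists_linearMap_of_forall_exists htot
  exact ⟨φ, fun p hp => hφ p (hSS' hp)⟩

end Solvable

section Purity

variable {R : Type u} [Ring R] {K L N P : Type u} [AddCommGroup K] [Module R K]
  [AddCommGroup L] [Module R L] [AddCommGroup N] [Module R N] [AddCommGroup P] [Module R P]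

theorem IsPureEpi.exists_le_ker_comp_eq {Y : Type u} [AddCommGroup Y] [Module R Y]
    {q : L →ₗ[R] Y} (hq : IsPureEpi R q) [Module.FinitePresentation R P] {W : Submodule R P}
    (hW : W.FG) (v : P →ₗ[R] L) (hv : W ≤ LinearMap.ker (q ∘ₗ v)) :
    ∃ ψ : P →ₗ[R] L, W ≤ LinearMap.ker ψ ∧ q ∘ₗ ψ = q ∘ₗ v := by
  have : Module.FinitePresentation R (P ⧸ W) :=
    Module.finitePresentation_of_surjective W.mkQ W.mkQ_surjective (by rwa [W.ker_mkQ])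
  obtain ⟨h, hh⟩ := hq (P ⧸ W) inferInstance inferInstance this (W.liftQ _ hv)
  refine ⟨h ∘ₗ W.mkQ, fun w hw => ?_, ?_⟩
  · simp [(Submodule.Quotient.mk_eq_zero W).2 hw]
  · rw [← LinearMap.comp_assoc, hh, Submodule.liftQ_mkQ]

theorem exists_comp_eq_on_of_isPureEpi_mkQ {f : K →ₗ[R] L}
    (hf : IsPureEpi R (LinearMap.range f).mkQ) [Module.FinitePresentation R P]
    [Module.Projective R P] {W : Submodule R P} (hW : W.FG) (v : P →ₗ[R] L)
    (hv : ∀ w ∈ W, v w ∈ LinearMap.range f) : ∃ θ : P →ₗ[R] K, ∀ w ∈ W, f (θ w) = v w := by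
  obtain ⟨ψ, hψ, hψv⟩ := hf.exists_le_ker_comp_eq hW v fun w hw => by
    simpa [Submodule.Quotient.mk_eq_zero] using hv w hw
  have hrange : ∀ x, (v - ψ) x ∈ LinearMap.range f := fun x =>
    (Submodule.Quotient.eq _).1 (LinearMap.congr_fun hψv x).symm
  obtain ⟨θ, hθ⟩ := Module.projective_lifting_property f.rangeRestrict
    ((v - ψ).codRestrict _ hrange) f.surjective_rangeRestrict
  refine ⟨θ, fun w hw => ?_⟩
  simpa [LinearMap.mem_ker.1 (hψ hw)] using congrArg Subtype.val (LinearMap.congr_fun hθ w)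

/-- A finite subsystem only involves the finite free module `supported R R s`, to which purity
applies. -/
theorem IsPureMono.isFinitelySolvable {f : K →ₗ[R] L} (hf : IsPureMono R f) (g : K →ₗ[R] N) :
    IsFinitelySolvable R
      {p : (L →₀ R) × N | ∃ k, Finsupp.linearCombination R id p.1 = f k ∧ p.2 = g k} := by
  classical
  intro T hT
  let s : Set L := ⋃ p ∈ T, ↑p.1.support
  have hs : s.Finite := T.finite_toSet.biUnion fun p _ => p.1.support.finite_toSet
  have : Finite s := hs.to_subtype
  let P := Finsupp.supported R R s
  have : Module.Free R P := .of_equiv (Finsupp.supportedEquivFinsupp s).symm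
  have : Module.Finite R P := .equiv (Finsupp.supportedEquivFinsupp s).symm
  have := Module.finitePresentation_of_projective R P
  have hmem : ∀ p ∈ T, p.1 ∈ P := fun p hp => (Finsupp.mem_supported R _).2
    (Set.subset_biUnion_of_mem (u := fun p => (↑p.1.support : Set L)) hp)
  let W := Submodule.span R (Set.range fun p : T => (⟨p.1.1, hmem _ p.2⟩ : P))
  let v := Finsupp.linearCombination R id ∘ₗ P.subtype
  have hv : W ≤ (LinearMap.range f).comap v := Submodule.span_le.2 <| by
    rintro _ ⟨p, rfl⟩
    obtain ⟨k, hk, -⟩ := hT p.2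
    exact ⟨k, hk.symm⟩
  obtain ⟨θ, hθ⟩ := exists_comp_eq_on_of_isPureEpi_mkQ (P := P) hf.2
    (Submodule.fg_span (Set.finite_range _)) v fun w hw => hv hw
  refine ⟨g ∘ₗ θ ∘ₗ Finsupp.restrictDom R R s, fun p hp => ?_⟩
  obtain ⟨k, hk, hpk⟩ := hT hp
  have hres : Finsupp.restrictDom R R s p.1 = ⟨p.1, hmem p hp⟩ :=
    LinearMap.congr_fun (Finsupp.restrictDom_comp_subtype s) ⟨p.1, hmem p hp⟩
  have hθk : θ ⟨p.1, hmem p hp⟩ = k :=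
    hf.1 ((hθ _ (Submodule.subset_span ⟨⟨p, hp⟩, rfl⟩)).trans hk)
  simp [hres, hθk, hpk]

theorem TraceDCC.isPureInjectiveModule (hN : TraceDCC R N) : IsPureInjectiveModule R N := by
  intro K L _ _ _ _ f hf g
  have hπ := Finsupp.linearCombination_id_surjective R L
  obtain ⟨φ, hφ⟩ := (hf.isFinitelySolvable g).exists_linearMap hN
  have hker : LinearMap.ker (Finsupp.linearCombination R id) ≤ LinearMap.ker φ := fun w hw =>
    hφ (w, 0) ⟨0, by simpa using hw, by simp⟩
  refine ⟨(LinearMap.ker _).liftQ φ hker ∘ₗ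
    ((Finsupp.linearCombination R id).quotKerEquivOfSurjective hπ).symm.toLinearMap,
    LinearMap.ext fun k => ?_⟩
  obtain ⟨w, hw⟩ := hπ (f k)
  simpa [← hw, LinearMap.quotKerEquivOfSurjective_symm_apply] using hφ (w, g k) ⟨k, hw, rfl⟩

end Purity

/-- If `Prod(M) ⊆ Add(M)` then `M` is `Σ`-pure-injective. -/
theorem sigmaPureInjective_of_prod_subset_add {R : Type u} [Ring R]
    (M : Type u) [AddCommGroup M] [Module R M]
    (hsub : ∀ (X : Type u) (_ : AddCommGroup X) (_ : Module R X),
      MemProd R M X → MemAdd R M X) :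
    IsSigmaPureInjective R M :=
  fun J => ((traceDCC_of_prod_subset_add M hsub).directSum J).isPureInjectiveModule
end
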